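/- For 𝒫 = (Bz^r, PGI^r) and all n ≥ 2, the cost of local monotonicity on the class 𝔚 of weighted games satisfies c_𝒫(n,𝔚) ≥ max(0, (n−3)/(n−1)). -/

import Mathlib

open scoped Classical

/-- A simple game on the player set `{1,…,n}` (modeled as `Fin n`):
a monotone map from coalitions to `{0,1}` (modeled as `Bool`) that is
`0` on the empty coalition and `1` on the grand coalition. -/
structure SimpleGame (n : ℕ) where
  win : Finset (Fin n) → Bool
  win_empty : win ∅ = false
  win_univ : win Finset.univ = true
  win_mono : ∀ ⦃S T : Finset (Fin n)⦄, S ⊆ T → win S = true → win T = true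

namespace SimpleGame

variable {n : ℕ}

/-- Player `i` dominates player `j`: `v((S ∪ {i}) \ {j}) ≥ v(S)` for every
coalition `S` with `j ∈ S` and `i ∉ S`. -/
def Dominates (v : SimpleGame n) (i j : Fin n) : Prop :=
  ∀ S : Finset (Fin n), j ∈ S → i ∉ S → v.win S ≤ v.win ((S ∪ {i}) \ {j})

/-- The game is complete if the dominance relation is a total preorder. -/
def IsComplete (v : SimpleGame n) : Prop :=
  (∀ i, v.Dominates i i) ∧
  (∀ i j, v.Dominates i j ∨ v.Dominates j i) ∧
  (∀ i j k, v.Dominates i j → v.Dominates j k → v.Dominates i k)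

/-- `S` is a minimal winning coalition: winning and every proper subset is losing. -/
def IsMWC (v : SimpleGame n) (S : Finset (Fin n)) : Prop :=
  v.win S = true ∧ ∀ T ⊂ S, v.win T = false

/-- `M_i`: the set of minimal winning coalitions containing player `i`. -/
noncomputable def Mset (v : SimpleGame n) (i : Fin n) : Finset (Finset (Fin n)) :=
  Finset.univ.filter fun S => v.IsMWC S ∧ i ∈ S

/-- `M_i(l)`: minimal winning coalitions of cardinality `l` containing `i`. -/
noncomputable def Mlset (v : SimpleGame n) (i : Fin n) (l : ℕ) : Finset (Finset (Fin n)) :=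
  (v.Mset i).filter fun S => S.card = l

/-- Raw Public Good index: `PGI^r_i(v) = |M_i|`. -/
noncomputable def PGI (v : SimpleGame n) (i : Fin n) : ℕ := (v.Mset i).card

/-- Raw Deegan-Packel index: `DP^r_i(v) = Σ_{S ∈ M_i} 1/|S|`. -/
noncomputable def DP (v : SimpleGame n) (i : Fin n) : ℝ :=
  ∑ S ∈ v.Mset i, (1 : ℝ) / (S.card : ℝ)

/-- The game is uniform if all minimal winning coalitions have the same cardinality. -/
def IsUniform (v : SimpleGame n) : Prop :=
  ∀ S T, v.IsMWC S → v.IsMWC T → S.card = T.card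

/-- `[q; w]` is a weighted representation of `v`. -/
def IsWeightedRep (v : SimpleGame n) (q : ℝ) (w : Fin n → ℝ) : Prop :=
  0 < q ∧ (∀ i, 0 ≤ w i) ∧ ∀ S : Finset (Fin n), v.win S = true ↔ q ≤ ∑ i ∈ S, w i

/-- The game is weighted. -/
def IsWeighted (v : SimpleGame n) : Prop := ∃ q w, v.IsWeightedRep q w

/-- `D_i`: coalitions decisive for player `i`. -/
noncomputable def Dset (v : SimpleGame n) (i : Fin n) : Finset (Finset (Fin n)) :=
  Finset.univ.filter fun S => i ∈ S ∧ v.win S = true ∧ v.win (S.erase i) = false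

/-- Raw Banzhaf index: `Bz^r_i(v) = |D_i|`. -/
noncomputable def Bz (v : SimpleGame n) (i : Fin n) : ℕ := (v.Dset i).card

/-- `S` is a shift-minimal winning coalition. -/
def IsSMWC (v : SimpleGame n) (S : Finset (Fin n)) : Prop :=
  v.IsMWC S ∧ ∀ i ∈ S, ∀ j ∉ S, v.Dominates i j → ¬ v.Dominates j i →
    v.win ((S \ {i}) ∪ {j}) = false

/-- `𝒮_i`: the set of shift-minimal winning coalitions containing player `i`. -/
noncomputable def Sset (v : SimpleGame n) (i : Fin n) : Finset (Finset (Fin n)) :=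
  Finset.univ.filter fun S => v.IsSMWC S ∧ i ∈ S

/-- Raw Shift index: `S^r_i(v) = |𝒮_i|`. -/
noncomputable def ShiftIdx (v : SimpleGame n) (i : Fin n) : ℕ := (v.Sset i).card

/-- The number of players for which the coalition `S` is decisive. -/
noncomputable def numDecisive (v : SimpleGame n) (S : Finset (Fin n)) : ℕ :=
  (Finset.univ.filter fun k => k ∈ S ∧ v.win S = true ∧ v.win (S.erase k) = false).card

/-- Raw Johnston index: `Jo^r_i(v) = Σ_{S ∈ D_i} 1/#{decisive players of S}`. -/
noncomputable def Jo (v : SimpleGame n) (i : Fin n) : ℝ :=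
  ∑ S ∈ v.Dset i, (1 : ℝ) / (v.numDecisive S : ℝ)

/-- `i` is a null player: it belongs to no minimal winning coalition. -/
def IsNull (v : SimpleGame n) (i : Fin n) : Prop := ∀ S, v.IsMWC S → i ∉ S

end SimpleGame

/-- A power index: assigns to every `n`-player simple game a vector in `ℝ^n`. -/
abbrev PowerIndex : Type := ∀ n : ℕ, SimpleGame n → Fin n → ℝ

/-- A class of games (one set of games for every number of players). -/
abbrev GameClass : Type := ∀ n : ℕ, Set (SimpleGame n)

/-- Convex combination `P^α = Σ_h α_h P^h` of power indices. -/
noncomputable def convexComb {r : ℕ} (α : Fin r → ℝ) (P : Fin r → PowerIndex) : PowerIndex :=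
  fun n v i => ∑ h, α h * P h n v i

/-- `Q` satisfies local monotonicity on the `n`-player games of `𝔊`. -/
def LMon (𝔊 : GameClass) (n : ℕ) (Q : PowerIndex) : Prop :=
  ∀ v ∈ 𝔊 n, ∀ i j : Fin n, v.Dominates i j → Q n v j ≤ Q n v i

/-- The cost of local monotonicity `c_𝒫(n,𝔊)`. -/
noncomputable def costLM {r : ℕ} [NeZero r] (P : Fin r → PowerIndex) (n : ℕ)
    (𝔊 : GameClass) : ℝ :=
  sInf {β : ℝ | β ∈ Set.Icc (0 : ℝ) 1 ∧
    ∀ α ∈ stdSimplex ℝ (Fin r), β ≤ α 0 → LMon 𝔊 n (convexComb α P)}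

/-- The raw Banzhaf index as a power index. -/
noncomputable def BzPI : PowerIndex := fun _ v i => (v.Bz i : ℝ)

/-- The raw Public Good index as a power index. -/
noncomputable def PGIPI : PowerIndex := fun _ v i => (v.PGI i : ℝ)

/-- The raw Shift index as a power index. -/
noncomputable def ShiftPI : PowerIndex := fun _ v i => (v.ShiftIdx i : ℝ)

/-- The raw Johnston index as a power index. -/
noncomputable def JoPI : PowerIndex := fun _ v i => v.Jo i

/-- The raw Deegan-Packel index as a power index. -/
noncomputable def DPPI : PowerIndex := fun _ v i => v.DP i

/-- `𝔚`: the class of weighted games. -/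
def WeightedClass : GameClass := fun _ => {v | v.IsWeighted}

/-!
In the weighted game `[2; 2, 1, …, 1]` the heavy player `z` dominates every other player `o`,
while `Bz^r_z ≤ n`, `PGI^r_z = 1` and `Bz^r_o ≥ PGI^r_o = n - 2`. Local monotonicity of
`α₁ Bz^r + (1 - α₁) PGI^r` at `(z, o)` therefore forces `n - 2 ≤ α₁ n + (1 - α₁)`, that is
`α₁ ≥ (n - 3) / (n - 1)`. The infimum defining the cost is over a nonempty set because `Bz^r`
itself is locally monotone: a decisive coalition for `j` that lacks `i` stays decisive, now for
`i`, when `j` is swapped for `i`.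
-/

open Finset SimpleGame

namespace SimpleGame

variable {n : ℕ}

lemma mem_Dset {v : SimpleGame n} {i : Fin n} {S : Finset (Fin n)} :
    S ∈ v.Dset i ↔ i ∈ S ∧ v.win S = true ∧ v.win (S.erase i) = false := by
  simp [Dset]

lemma mem_Mset {v : SimpleGame n} {i : Fin n} {S : Finset (Fin n)} :
    S ∈ v.Mset i ↔ v.IsMWC S ∧ i ∈ S := by
  simp [Mset]

lemma IsMWC.eq_of_subset {v : SimpleGame n} {S T : Finset (Fin n)} (hS : v.IsMWC S)
    (hTS : T ⊆ S) (hT : v.win T = true) : T = S := by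
  by_contra hne
  simp [hS.2 T (ssubset_of_subset_of_ne hTS hne)] at hT

lemma Mset_subset_Dset (v : SimpleGame n) (i : Fin n) : v.Mset i ⊆ v.Dset i := by
  intro S hS
  obtain ⟨⟨hwin, hmin⟩, hi⟩ := mem_Mset.1 hS
  exact mem_Dset.2 ⟨hi, hwin, hmin _ (erase_ssubset hi)⟩

lemma PGI_le_Bz (v : SimpleGame n) (i : Fin n) : v.PGI i ≤ v.Bz i :=
  card_le_card (v.Mset_subset_Dset i)

namespace Dominates

variable {v : SimpleGame n} {i j : Fin n} {S : Finset (Fin n)}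

lemma win_insert_erase (h : v.Dominates i j) (hj : j ∈ S) (hi : i ∉ S) (hS : v.win S = true) :
    v.win (insert i (S.erase j)) = true := by
  have hij : i ≠ j := by rintro rfl; exact hi hj
  have hswap : (S ∪ {i}) \ {j} = insert i (S.erase j) := by
    rw [union_comm, ← insert_eq, sdiff_singleton_eq_erase, erase_insert_of_ne hij]
  have hdom := h S hj hi
  rw [hS, hswap] at hdom
  exact top_le_iff.mp hdom

lemma lose_erase (h : v.Dominates i j) (hi : i ∈ S) (hj : j ∈ S)
    (hS : v.win (S.erase j) = false) : v.win (S.erase i) = false := by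
  rcases eq_or_ne i j with rfl | hij
  · exact hS
  rw [Bool.eq_false_iff] at hS ⊢
  intro hwin
  have hwin' := h.win_insert_erase (mem_erase.2 ⟨hij.symm, hj⟩) (notMem_erase i S) hwin
  rw [erase_right_comm, insert_erase (mem_erase.2 ⟨hij, hi⟩)] at hwin'
  exact hS hwin'

theorem Bz_le (h : v.Dominates i j) : v.Bz j ≤ v.Bz i := by
  refine card_le_card_of_injOn (fun S => if i ∈ S then S else insert i (S.erase j)) ?_ ?_
  · intro S hS
    obtain ⟨hj, hwin, hlose⟩ := mem_Dset.1 hS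
    rw [mem_coe, mem_Dset]
    dsimp only
    split_ifs with hi
    · exact ⟨hi, hwin, h.lose_erase hi hj hlose⟩
    · have hi' : i ∉ S.erase j := fun h' => hi (mem_of_mem_erase h')
      exact ⟨mem_insert_self i _, h.win_insert_erase hj hi hwin, by rwa [erase_insert hi']⟩
  · intro S hS T hT hST
    have hjS := (mem_Dset.1 hS).1
    have hjT := (mem_Dset.1 hT).1
    dsimp only at hST
    split_ifs at hST with hiS hiT hiT
    · exact hST
    · have hij : i ≠ j := by rintro rfl; exact hiT hjT
      exact absurd (hST ▸ hjS) (by simp [hij.symm])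
    · have hij : i ≠ j := by rintro rfl; exact hiS hjS
      exact absurd (hST.symm ▸ hjT) (by simp [hij.symm])
    · have hiS' : i ∉ S.erase j := fun h' => hiS (mem_of_mem_erase h')
      have hiT' : i ∉ T.erase j := fun h' => hiT (mem_of_mem_erase h')
      have hSTj := congrArg (·.erase i) hST
      simp only [erase_insert hiS', erase_insert hiT'] at hSTj
      exact erase_injOn' j hjS hjT hSTj

end Dominates

def heavyPlayerGame (n : ℕ) (z : Fin n) : SimpleGame n where
  win S := decide (z ∈ S ∨ 2 ≤ S.card)
  win_empty := by simp
  win_univ := by simp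
  win_mono S T hST := by
    simp only [decide_eq_true_eq]
    exact Or.imp (@hST z) (le_trans · (card_le_card hST))

@[simp]
lemma heavyPlayerGame_win (z : Fin n) (S : Finset (Fin n)) :
    (heavyPlayerGame n z).win S = true ↔ z ∈ S ∨ 2 ≤ S.card := by
  simp [heavyPlayerGame]

lemma heavyPlayerGame_isWeighted (z : Fin n) : (heavyPlayerGame n z).IsWeighted := by
  refine ⟨2, fun i => 1 + if i = z then 1 else 0, two_pos, fun i => by positivity, fun S => ?_⟩
  rw [heavyPlayerGame_win, sum_add_distrib, sum_ite_eq']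
  simp only [sum_const, nsmul_eq_mul, mul_one]
  by_cases hz : z ∈ S
  · have hcard : (1 : ℝ) ≤ S.card := by exact_mod_cast card_pos.2 ⟨z, hz⟩
    simp only [hz, true_or, if_true, true_iff]
    linarith
  · simp only [hz, false_or, if_false, add_zero]
    exact Nat.ofNat_le_cast.symm

lemma heavyPlayerGame_dominates (z o : Fin n) : (heavyPlayerGame n z).Dominates z o := by
  intro S ho hz
  have hzo : z ≠ o := by rintro rfl; exact hz ho
  have hwin : (heavyPlayerGame n z).win ((S ∪ {z}) \ {o}) = true := by simp [hzo]
  rw [hwin]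
  exact le_top

lemma heavyPlayerGame_Bz_self_le (z : Fin n) : (heavyPlayerGame n z).Bz z ≤ n := by
  have hsub : (heavyPlayerGame n z).Dset z ⊆ univ.image fun k => {z, k} := by
    intro S hS
    obtain ⟨hz, -, hlose⟩ := mem_Dset.1 hS
    have hcard : (S.erase z).card < 2 := by simpa [heavyPlayerGame] using hlose
    rw [← insert_erase hz, mem_image]
    obtain h | h : (S.erase z).card = 0 ∨ (S.erase z).card = 1 := by omega
    · exact ⟨z, mem_univ _, by simp [card_eq_zero.1 h]⟩
    · obtain ⟨k, hk⟩ := card_eq_one.1 h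
      exact ⟨k, mem_univ _, by rw [hk]⟩
  calc (heavyPlayerGame n z).Bz z ≤ (univ.image fun k => ({z, k} : Finset (Fin n))).card :=
        card_le_card hsub
    _ ≤ n := card_image_le.trans (by simp)

lemma heavyPlayerGame_PGI_self_le (z : Fin n) : (heavyPlayerGame n z).PGI z ≤ 1 := by
  have hsub : (heavyPlayerGame n z).Mset z ⊆ {{z}} := by
    intro S hS
    obtain ⟨hmwc, hz⟩ := mem_Mset.1 hS
    exact mem_singleton.2 (hmwc.eq_of_subset (singleton_subset_iff.2 hz) (by simp)).symm
  exact (card_le_card hsub).trans_eq (card_singleton _)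

lemma heavyPlayerGame_isMWC_pair {z o k : Fin n} (hzo : z ≠ o) (hkz : k ≠ z) (hko : k ≠ o) :
    (heavyPlayerGame n z).IsMWC {o, k} := by
  have hz : z ∉ ({o, k} : Finset (Fin n)) := by simp [hzo, hkz.symm]
  refine ⟨by simp [card_pair hko.symm], fun T hT => ?_⟩
  have hzT : z ∉ T := fun h => hz (hT.subset h)
  have hcard : T.card < 2 := (card_lt_card hT).trans_eq (card_pair hko.symm)
  simp [heavyPlayerGame, hzT, hcard]

lemma le_heavyPlayerGame_PGI_add_two {z o : Fin n} (hzo : z ≠ o) :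
    n ≤ (heavyPlayerGame n z).PGI o + 2 := by
  have hinj : Set.InjOn (fun k => ({o, k} : Finset (Fin n))) ({o}ᶜ : Set (Fin n)) := by
    intro k hk l _ hkl
    have hkl' : k ∈ ({o, l} : Finset (Fin n)) := by
      rw [← show ({o, k} : Finset (Fin n)) = {o, l} from hkl]
      exact mem_insert_of_mem (mem_singleton_self k)
    simpa [Set.mem_compl_singleton_iff.1 hk] using hkl'
  calc n = (({z, o} : Finset (Fin n))ᶜ).card + 2 := by
        rw [← card_pair hzo, card_compl_add_card, Fintype.card_fin]
    _ ≤ (heavyPlayerGame n z).PGI o + 2 := by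
      gcongr
      refine card_le_card_of_injOn _ (fun k hk => ?_) (hinj.mono fun k hk => ?_)
      all_goals simp only [coe_compl, Set.mem_compl_iff, mem_coe, mem_insert, mem_singleton,
        not_or] at hk
      · exact mem_Mset.2 ⟨heavyPlayerGame_isMWC_pair hzo hk.1 hk.2, mem_insert_self o _⟩
      · exact hk.2

end SimpleGame

section CostOfLocalMonotonicity

variable {r : ℕ} [NeZero r] {P : Fin r → PowerIndex} {n : ℕ} {𝔊 : GameClass}

lemma convexComb_eq_of_one_le {α : Fin r → ℝ} (hα : α ∈ stdSimplex ℝ (Fin r)) (h1 : 1 ≤ α 0) :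
    convexComb α P = P 0 := by
  obtain ⟨hnn, hsum⟩ := hα
  have hrest : ∑ h ∈ univ.erase 0, α h = 0 := by
    have := add_sum_erase univ α (mem_univ 0)
    linarith [sum_nonneg fun h (_ : h ∈ univ.erase 0) => hnn h]
  have h0 : α 0 = 1 := by linarith [add_sum_erase univ α (mem_univ 0)]
  have hzero : ∀ h ≠ 0, α h = 0 := fun h hh =>
    (sum_eq_zero_iff_of_nonneg fun h _ => hnn h).1 hrest h (mem_erase.2 ⟨hh, mem_univ h⟩)
  funext m v i
  rw [convexComb, sum_eq_single 0 (fun h _ hh => by rw [hzero h hh, zero_mul]) (by simp), h0,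
    one_mul]

lemma le_costLM {c : ℝ} (hP : LMon 𝔊 n (P 0))
    (hc : ∀ β ∈ Set.Icc (0 : ℝ) 1,
      (∀ α ∈ stdSimplex ℝ (Fin r), β ≤ α 0 → LMon 𝔊 n (convexComb α P)) → c ≤ β) :
    c ≤ costLM P n 𝔊 :=
  le_csInf ⟨1, ⟨zero_le_one, le_rfl⟩, fun α hα h1 => by
    rwa [convexComb_eq_of_one_le hα h1]⟩ fun β hβ => hc β hβ.1 hβ.2

end CostOfLocalMonotonicity

lemma LMon_BzPI (𝔊 : GameClass) (n : ℕ) : LMon 𝔊 n BzPI :=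
  fun _ _ _ _ h => Nat.cast_le.2 h.Bz_le

lemma heavyPlayerGame_sub_three_le {n : ℕ} {z o : Fin n} (hzo : z ≠ o) {β : ℝ} (hβ0 : 0 ≤ β)
    (hβ1 : β ≤ 1)
    (hLM : convexComb ![β, 1 - β] ![BzPI, PGIPI] n (heavyPlayerGame n z) o ≤
      convexComb ![β, 1 - β] ![BzPI, PGIPI] n (heavyPlayerGame n z) z) :
    (n : ℝ) - 3 ≤ β * (n - 1) := by
  simp only [convexComb, Fin.sum_univ_two, BzPI, PGIPI, Matrix.cons_val_zero,
    Matrix.cons_val_one] at hLM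
  have hBz_z : ((heavyPlayerGame n z).Bz z : ℝ) ≤ n := by
    exact_mod_cast heavyPlayerGame_Bz_self_le z
  have hPGI_z : ((heavyPlayerGame n z).PGI z : ℝ) ≤ 1 := by
    exact_mod_cast heavyPlayerGame_PGI_self_le z
  have hPGI_o : (n : ℝ) ≤ (heavyPlayerGame n z).PGI o + 2 := by
    exact_mod_cast le_heavyPlayerGame_PGI_add_two hzo
  have hBz_o : ((heavyPlayerGame n z).PGI o : ℝ) ≤ (heavyPlayerGame n z).Bz o := by
    exact_mod_cast PGI_le_Bz _ o
  nlinarith [mul_le_mul_of_nonneg_left hBz_z hβ0, mul_le_mul_of_nonneg_left hBz_o hβ0,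
    mul_le_mul_of_nonneg_left hPGI_z (sub_nonneg.2 hβ1)]

/-- for `𝒫 = (Bz^r, PGI^r)` and `n ≥ 2`, the cost of local
monotonicity on weighted games is at least `max(0, (n-3)/(n-1))`. -/
theorem costLM_Bz_PGI_lower_bound (n : ℕ) (hn : 2 ≤ n) :
    max 0 (((n : ℝ) - 3) / ((n : ℝ) - 1)) ≤ costLM ![BzPI, PGIPI] n WeightedClass := by
  refine le_costLM (LMon_BzPI _ n) fun β ⟨hβ0, hβ1⟩ hadm => max_le hβ0 ?_
  let z : Fin n := ⟨0, by omega⟩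
  let o : Fin n := ⟨1, by omega⟩
  have hzo : z ≠ o := by simp [z, o, Fin.ext_iff]
  have hα : ![β, 1 - β] ∈ stdSimplex ℝ (Fin 2) :=
    ⟨Fin.forall_fin_two.2 ⟨hβ0, by simpa using hβ1⟩, by simp⟩
  have hLM := hadm _ hα le_rfl _ (heavyPlayerGame_isWeighted z) z o
    (heavyPlayerGame_dominates z o)
  have hn1 : (0 : ℝ) < n - 1 := by linarith [show (2 : ℝ) ≤ n by exact_mod_cast hn]
  rw [div_le_iff₀ hn1]
  exact heavyPlayerGame_sub_three_le hzo hβ0 hβ1 hLM
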